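/- In the CAR algebra A over Z^ν: for an infinite subset I, the commutant of the even part A(I)₊ in A equals A(I^c). -/

import Mathlib

/-- The C*-subalgebra `A(I)` of the CAR algebra associated to a region `I ⊆ ℤ^ν`. -/
noncomputable def carSub {ν : ℕ} {A : Type*} [CStarAlgebra A]
    (a : (Fin ν → ℤ) → A) (I : Set (Fin ν → ℤ)) : StarSubalgebra ℂ A :=
  (StarAlgebra.adjoin ℂ (a '' I)).topologicalClosure

/-!
The generators are replaced by the self-adjoint unitary Majorana operators
`c (i, false) = a i + (a i)⋆` and `c (i, true) = I • (a i - (a i)⋆)`, which square to one and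
pairwise anticommute.
Conjugation by a Majorana operator at a site outside `I` implements `Θ` on `A(I)`, so `A(Iᶜ)`
commutes with the even part of `A(I)`. Conversely, if `x` commutes with the even part, it commutes
with every product `c g * c h` of Majorana operators over `I`, so `c g * x * c g` does not depend
on `g`, and `x` splits into parts `z` with `c g * z * c g = ± z` for all `g` over `I`. Such a `z`
lies in `A(Iᶜ)`: approximate it by a polynomial `q` in finitely many Majorana operators and
average `q` over conjugation by those over `I`, together with one more over `I` that does not
occur in `q` (it exists because `I` is infinite). This averaging is a contraction fixing `z`, and
it kills every monomial in which some operator over `I` occurs an odd number of times.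
-/

structure IsCliffordFamily {ι R : Type*} [Ring R] (c : ι → R) : Prop where
  mul_self : ∀ g, c g * c g = 1
  anticomm : ∀ g h, g ≠ h → c g * c h = -(c h * c g)

namespace IsCliffordFamily

variable {ι R : Type*} [Ring R] {c : ι → R}

theorem mul_prod_map [DecidableEq ι] (hc : IsCliffordFamily c) (g : ι) (l : List ι) :
    c g * (l.map c).prod = (-1) ^ (l.length + l.count g) * ((l.map c).prod * c g) := by
  induction l with
  | nil => simp
  | cons h t ih =>
    have hcomm : ∀ n : ℕ, c h * (-1) ^ n = (-1) ^ n * c h :=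
      fun n => ((Commute.neg_one_left (c h)).pow_left n).eq.symm
    rw [List.map_cons, List.prod_cons, List.length_cons]
    rcases eq_or_ne h g with rfl | hne
    · have hconj : c h * (t.map c).prod * c h = (-1) ^ (t.length + t.count h) * (t.map c).prod := by
        rw [ih, mul_assoc, mul_assoc, hc.mul_self, mul_one]
      rw [List.count_cons_self, ← mul_assoc, hc.mul_self, one_mul, hconj,
        ← mul_assoc, ← pow_add, Even.neg_one_pow ⟨t.length + t.count h + 1, by ring⟩, one_mul]
    · rw [List.count_cons_of_ne hne, ← mul_assoc, hc.anticomm g h hne.symm, neg_mul, mul_assoc,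
        ih, ← mul_assoc (c h), hcomm, add_right_comm, pow_succ]
      noncomm_ring

theorem conj_prod_map [DecidableEq ι] (hc : IsCliffordFamily c) (g : ι) (l : List ι) :
    c g * (l.map c).prod * c g = (-1) ^ (l.length + l.count g) * (l.map c).prod := by
  rw [hc.mul_prod_map, mul_assoc, mul_assoc, hc.mul_self, mul_one]

theorem prod_map_mem_of_even_count [DecidableEq ι] (hc : IsCliffordFamily c) {S : Subring R}
    {J : Set ι} (hS : ∀ g ∉ J, c g ∈ S) (l : List ι) (hl : ∀ g ∈ l, g ∈ J → Even (l.count g)) :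
    (l.map c).prod ∈ S := by
  match l with
  | [] => simp
  | g :: t =>
    rw [List.map_cons, List.prod_cons]
    by_cases hgJ : g ∈ J
    · have hgt : g ∈ t := by
        have := hl g List.mem_cons_self hgJ
        rw [List.count_cons_self, Nat.even_add_one] at this
        exact List.count_pos_iff.mp (Nat.pos_of_ne_zero fun h0 => this (h0 ▸ ⟨0, rfl⟩))
      obtain ⟨u, r, rfl⟩ := List.append_of_mem hgt
      have hcount : ∀ h,
          (g :: (u ++ g :: r)).count h = (u ++ r).count h + 2 * (if g = h then 1 else 0) := by
        intro h
        simp only [List.count_cons, List.count_append, beq_iff_eq]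
        split_ifs <;> omega
      have hur : ((u ++ r).map c).prod ∈ S := by
        refine hc.prod_map_mem_of_even_count hS (u ++ r) fun h hh hhJ => ?_
        have := hl h (by simp only [List.mem_cons, List.mem_append] at hh ⊢; tauto) hhJ
        rwa [hcount, Nat.even_add, iff_true_right (even_two_mul _)] at this
      simp only [List.map_append, List.map_cons, List.prod_append, List.prod_cons] at hur ⊢
      rw [← mul_assoc, ← mul_assoc, hc.conj_prod_map, mul_assoc]
      exact S.mul_mem (S.pow_mem (S.neg_mem S.one_mem) _) hur
    · refine S.mul_mem (hS g hgJ) (hc.prod_map_mem_of_even_count hS t fun h hh hhJ => ?_)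
      have := hl h (List.mem_cons_of_mem _ hh) hhJ
      rwa [List.count_cons_of_ne (by rintro rfl; exact hgJ hhJ)] at this
termination_by l.length

theorem exists_eq_add_conj_eq_and_conj_eq_neg {𝕜 : Type*} [Field 𝕜] [CharZero 𝕜] [Algebra 𝕜 R]
    (hc : IsCliffordFamily c) {J : Set ι} (hJ : J.Nonempty) {x : R}
    (hx : ∀ g ∈ J, ∀ h ∈ J, Commute x (c g * c h)) :
    ∃ x₀ x₁, x = x₀ + x₁ ∧ ∀ g ∈ J, c g * x₀ * c g = x₀ ∧ c g * x₁ * c g = -x₁ := by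
  obtain ⟨g₀, hg₀⟩ := hJ
  set y := c g₀ * x * c g₀
  have hxy : ∀ g ∈ J, c g * x * c g = y := fun g hg => by
    calc c g * x * c g = c g * (x * (c g * c g₀)) * c g₀ := by
          simp only [mul_assoc, hc.mul_self, mul_one]
      _ = c g₀ * x * c g₀ := by
          rw [(hx g hg g₀ hg₀).eq, ← mul_assoc (c g), ← mul_assoc (c g), hc.mul_self, one_mul,
            mul_assoc]
  have hyx : ∀ g ∈ J, c g * y * c g = x := fun g hg => by
    rw [← hxy g hg, ← mul_assoc, ← mul_assoc, hc.mul_self, one_mul, mul_assoc, hc.mul_self,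
      mul_one]
  refine ⟨(2⁻¹ : 𝕜) • (x + y), (2⁻¹ : 𝕜) • (x - y), ?_, fun g hg => ⟨?_, ?_⟩⟩
  · rw [← smul_add, add_add_sub_cancel, ← two_smul 𝕜, smul_smul, inv_mul_cancel₀ two_ne_zero,
      one_smul]
  · rw [mul_smul_comm, smul_mul_assoc, mul_add, add_mul, hxy g hg, hyx g hg, add_comm]
  · rw [mul_smul_comm, smul_mul_assoc, mul_sub, sub_mul, hxy g hg, hyx g hg, ← smul_neg, neg_sub]

end IsCliffordFamily

theorem Algebra.adjoin_range_eq_span_prod_map {R A ι : Type*} [CommSemiring R] [Semiring A]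
    [Algebra R A] (c : ι → A) :
    Subalgebra.toSubmodule (Algebra.adjoin R (Set.range c)) =
      Submodule.span R (Set.range fun l : List ι => (l.map c).prod) := by
  rw [Algebra.adjoin_eq_span, ← FreeMonoid.mrange_lift, MonoidHom.coe_mrange]
  congr 1
  ext x
  simp only [Set.mem_range, FreeMonoid.lift_apply]
  exact ⟨fun ⟨l, hl⟩ => ⟨l.toList, hl⟩, fun ⟨l, hl⟩ => ⟨FreeMonoid.ofList l, hl⟩⟩

section Averaging

variable (𝕜 : Type*) {A : Type*} [RCLike 𝕜] [NormedRing A] [NormedAlgebra 𝕜 A]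

/-- For `u * u = 1`, the projection onto the `(-1) ^ s`-eigenspace of `z ↦ u * z * u`. -/
def conjAvg (s : ℕ) (u : A) : Module.End 𝕜 A where
  toFun z := (2⁻¹ : 𝕜) • (z + (-1 : 𝕜) ^ s • (u * z * u))
  map_add' z w := by simp only [mul_add, add_mul, smul_add]; abel
  map_smul' r z := by
    simp only [mul_smul_comm, smul_mul_assoc, smul_add, RingHom.id_apply, smul_comm r]

variable {𝕜}

theorem conjAvg_apply (s : ℕ) (u z : A) :
    conjAvg 𝕜 s u z = (2⁻¹ : 𝕜) • (z + (-1 : 𝕜) ^ s • (u * z * u)) := rfl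

theorem conjAvg_apply_of_conj_eq {s : ℕ} {u z : A} (hz : u * z * u = (-1 : 𝕜) ^ s • z) :
    conjAvg 𝕜 s u z = z := by
  rw [conjAvg_apply, hz, smul_smul, ← mul_pow, neg_one_mul, neg_neg, one_pow, one_smul,
    ← two_smul 𝕜, smul_smul, inv_mul_cancel₀ two_ne_zero, one_smul]

theorem conjAvg_apply_of_conj_eq_neg_one_pow {s n : ℕ} {u z : A}
    (hz : u * z * u = (-1 : A) ^ n * z) :
    conjAvg 𝕜 s u z = if Even (s + n) then z else 0 := by
  have hz' : u * z * u = (-1 : 𝕜) ^ n • z := by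
    rw [hz, Algebra.smul_def, map_pow, map_neg, map_one]
  rw [conjAvg_apply, hz', smul_smul, ← pow_add]
  split_ifs with h
  · rw [h.neg_one_pow, one_smul, ← two_smul 𝕜, smul_smul, inv_mul_cancel₀ two_ne_zero, one_smul]
  · rw [(Nat.not_even_iff_odd.mp h).neg_one_pow, neg_one_smul, add_neg_cancel, smul_zero]

theorem norm_conjAvg_apply_le (s : ℕ) {u : A} (hu : ‖u‖ ≤ 1) (z : A) :
    ‖conjAvg 𝕜 s u z‖ ≤ ‖z‖ := by
  have hconj : ‖u * z * u‖ ≤ ‖z‖ :=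
    calc ‖u * z * u‖ ≤ ‖u‖ * ‖z‖ * ‖u‖ := norm_mul₃_le
      _ ≤ 1 * ‖z‖ * 1 := by gcongr
      _ = ‖z‖ := by ring
  calc ‖conjAvg 𝕜 s u z‖ ≤ 2⁻¹ * (‖z‖ + ‖u * z * u‖) := by
        rw [conjAvg_apply, norm_smul, norm_inv, RCLike.norm_two]
        gcongr
        refine (norm_add_le _ _).trans_eq ?_
        rw [norm_smul, norm_pow, norm_neg, norm_one, one_pow, one_mul]
    _ ≤ ‖z‖ := by linarith

theorem norm_list_prod_apply_le {L : List (Module.End 𝕜 A)} (hL : ∀ f ∈ L, ∀ z, ‖f z‖ ≤ ‖z‖)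
    (z : A) : ‖L.prod z‖ ≤ ‖z‖ := by
  induction L with
  | nil => simp
  | cons f L ih =>
    rw [List.prod_cons, Module.End.mul_apply]
    exact (hL f List.mem_cons_self _).trans (ih fun f hf => hL f (List.mem_cons_of_mem _ hf))

end Averaging

namespace IsCliffordFamily

variable {ι 𝕜 A : Type*} [RCLike 𝕜] [NormedRing A] [NormedAlgebra 𝕜 A]
  {c : ι → A}

theorem list_prod_conjAvg_apply_prod_map [DecidableEq ι] (hc : IsCliffordFamily c) (s : ℕ)
    (gs l : List ι) :
    (gs.map fun g => conjAvg 𝕜 s (c g)).prod (l.map c).prod =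
      if ∀ g ∈ gs, Even (s + (l.length + l.count g)) then (l.map c).prod else 0 := by
  induction gs with
  | nil => simp
  | cons g gs ih =>
    rw [List.map_cons, List.prod_cons, Module.End.mul_apply, ih]
    simp only [List.forall_mem_cons]
    split_ifs <;>
      simp_all [conjAvg_apply_of_conj_eq_neg_one_pow (𝕜 := 𝕜) (hc.conj_prod_map g l)]

theorem list_prod_conjAvg_apply_prod_map_mem [DecidableEq ι] (hc : IsCliffordFamily c) (s : ℕ)
    {J : Set ι} {gs l : List ι} {g₀ : ι} (hg₀gs : g₀ ∈ gs) (hg₀l : g₀ ∉ l)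
    (hgs : ∀ g ∈ l, g ∈ J → g ∈ gs) :
    (gs.map fun g => conjAvg 𝕜 s (c g)).prod (l.map c).prod ∈ Algebra.adjoin 𝕜 (c '' Jᶜ) := by
  rw [hc.list_prod_conjAvg_apply_prod_map]
  split_ifs with heven
  · -- `g₀` does not occur in `l`, so surviving the average over `g₀` forces `s + l.length` to be
    -- even; surviving the average over `g ∈ J` then forces `l.count g` to be even.
    have hbase : Even (s + l.length) := by
      simpa [List.count_eq_zero_of_not_mem hg₀l] using heven g₀ hg₀gs
    refine hc.prod_map_mem_of_even_count (S := (Algebra.adjoin 𝕜 (c '' Jᶜ)).toSubring)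
      (fun g hg => Algebra.subset_adjoin ⟨g, hg, rfl⟩) l fun g hgl hgJ => ?_
    have := heven g (hgs g hgl hgJ)
    rw [← add_assoc, Nat.even_add] at this
    exact this.mp hbase
  · exact zero_mem _

theorem mem_closure_adjoin_compl_of_conj (hc : IsCliffordFamily c) (hnorm : ∀ g, ‖c g‖ ≤ 1)
    {J : Set ι} (hJ : J.Infinite) (s : ℕ) {z : A}
    (hz : z ∈ (Algebra.adjoin 𝕜 (Set.range c)).topologicalClosure)
    (hconj : ∀ g ∈ J, c g * z * c g = (-1 : 𝕜) ^ s • z) :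
    z ∈ (Algebra.adjoin 𝕜 (c '' Jᶜ)).topologicalClosure := by
  classical
  rw [← SetLike.mem_coe, Subalgebra.topologicalClosure_coe, Metric.mem_closure_iff] at hz ⊢
  intro ε hε
  obtain ⟨q, hq, hzq⟩ := hz ε hε
  have hq' : q ∈ Submodule.span 𝕜 (Set.range fun l : List ι => (l.map c).prod) := by
    rw [← Algebra.adjoin_range_eq_span_prod_map]; exact hq
  obtain ⟨f, hf⟩ := Finsupp.mem_span_range_iff_exists_finsupp.mp hq'
  set F := f.support.biUnion List.toFinset
  obtain ⟨g₀, hg₀J, hg₀F⟩ := (hJ.sdiff F.finite_toSet).nonempty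
  set gs := g₀ :: (F.filter (· ∈ J)).toList
  have hgsJ : ∀ g ∈ gs, g ∈ J := by
    simp only [gs, List.mem_cons, Finset.mem_toList, Finset.mem_filter]
    rintro g (rfl | ⟨-, hg⟩) <;> assumption
  set T := (gs.map fun g => conjAvg 𝕜 s (c g)).prod
  have hTz : T z = z := by
    refine (MulAction.stabilizerSubmonoid (Module.End 𝕜 A) z).list_prod_mem ?_
    simp only [List.mem_map]
    rintro _ ⟨g, hg, rfl⟩
    exact conjAvg_apply_of_conj_eq (hconj g (hgsJ g hg))
  refine ⟨T q, ?_, ?_⟩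
  · rw [← hf, map_finsuppSum]
    refine Subalgebra.sum_mem _ fun l hl => ?_
    have hlF : ∀ g ∈ l, g ∈ F := fun g hg =>
      Finset.mem_biUnion.mpr ⟨l, hl, List.mem_toFinset.mpr hg⟩
    dsimp only
    rw [LinearMap.map_smul]
    exact Subalgebra.smul_mem _ (hc.list_prod_conjAvg_apply_prod_map_mem s List.mem_cons_self
      (fun h => hg₀F (hlF g₀ h)) fun g hgl hgJ => List.mem_cons_of_mem _
        (Finset.mem_toList.mpr (Finset.mem_filter.mpr ⟨hlF g hgl, hgJ⟩))) _
  · calc dist z (T q) = ‖T (z - q)‖ := by rw [dist_eq_norm, map_sub, hTz]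
      _ ≤ ‖z - q‖ := norm_list_prod_apply_le (by
          simp only [List.mem_map]
          rintro _ ⟨g, -, rfl⟩
          exact norm_conjAvg_apply_le s (hnorm g)) _
      _ < ε := by rwa [← dist_eq_norm]

end IsCliffordFamily

section Majorana

variable {ι A : Type*} [Ring A] [StarRing A] [Algebra ℂ A]

def majorana (a : ι → A) : ι × Bool → A
  | (i, false) => a i + star (a i)
  | (i, true) => Complex.I • (a i - star (a i))

variable {a : ι → A}

theorem star_majorana [StarModule ℂ A] (g : ι × Bool) : star (majorana a g) = majorana a g := by
  rcases g with ⟨i, _ | _⟩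
  · simp [majorana, add_comm]
  · simp [majorana, star_smul, ← smul_neg]

theorem eq_majorana (i : ι) :
    a i = (2⁻¹ : ℂ) • (majorana a (i, false) - Complex.I • majorana a (i, true)) := by
  simp only [majorana, smul_smul, Complex.I_mul_I]
  module

theorem isCliffordFamily_majorana [DecidableEq ι]
    (hCAR₁ : ∀ i j, star (a i) * a j + a j * star (a i) = if i = j then (1 : A) else 0)
    (hCAR₂ : ∀ i j, a i * a j + a j * a i = 0) : IsCliffordFamily (majorana a) := by
  have hsq : ∀ i, a i * a i = 0 := fun i => by
    simpa only [← two_smul ℂ, smul_eq_zero, two_ne_zero, false_or] using hCAR₂ i i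
  have hsq' : ∀ i, star (a i) * star (a i) = 0 := fun i => by
    simpa only [star_mul, star_zero] using congrArg star (hsq i)
  have hone : ∀ i, star (a i) * a i = 1 - a i * star (a i) := fun i =>
    eq_sub_of_add_eq (by simpa using hCAR₁ i i)
  constructor
  · rintro ⟨i, _ | _⟩ <;>
    · simp only [majorana, mul_add, add_mul, mul_sub, sub_mul, smul_mul_assoc, mul_smul_comm,
        hsq, hsq', hone]
      match_scalars <;> simp
  · rintro ⟨i, b⟩ ⟨j, b'⟩ hne
    rcases eq_or_ne i j with rfl | hij
    · obtain rfl : b' = !b := by cases b <;> cases b' <;> simp_all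
      cases b <;>
      · simp only [majorana, Bool.not_false, Bool.not_true, mul_add, add_mul, mul_sub, sub_mul,
          smul_mul_assoc, mul_smul_comm, hsq, hsq', hone]
        module
    · have e₁ : a i * a j = -(a j * a i) := eq_neg_of_add_eq_zero_left (hCAR₂ i j)
      have e₂ : star (a i) * a j = -(a j * star (a i)) :=
        eq_neg_of_add_eq_zero_left (by simpa [hij] using hCAR₁ i j)
      have e₃ : a i * star (a j) = -(star (a j) * a i) :=
        eq_neg_of_add_eq_zero_left (by simpa [hij.symm, add_comm] using hCAR₁ j i)
      have e₄ : star (a i) * star (a j) = -(star (a j) * star (a i)) :=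
        eq_neg_of_add_eq_zero_left (by simpa [add_comm] using congrArg star (hCAR₂ i j))
      cases b <;> cases b' <;>
      · simp only [majorana, mul_add, add_mul, mul_sub, sub_mul, smul_mul_assoc, mul_smul_comm,
          e₁, e₂, e₃, e₄]
        module

theorem star_eq_majorana_sub (i : ι) : star (a i) = majorana a (i, false) - a i := by
  simp [majorana]

theorem majorana_mem_adjoin [StarModule ℂ A] {S : Set ι} {g : ι × Bool} (hg : g.1 ∈ S) :
    majorana a g ∈ StarAlgebra.adjoin ℂ (a '' S) := by
  have ha : a g.1 ∈ StarAlgebra.adjoin ℂ (a '' S) := StarAlgebra.subset_adjoin ℂ _ ⟨g.1, hg, rfl⟩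
  rcases g with ⟨i, _ | _⟩
  · exact add_mem ha (star_mem ha)
  · exact SMulMemClass.smul_mem _ (sub_mem ha (star_mem ha))

theorem toSubalgebra_starAlgebraAdjoin_image [StarModule ℂ A] (S : Set ι) :
    (StarAlgebra.adjoin ℂ (a '' S)).toSubalgebra =
      Algebra.adjoin ℂ (majorana a '' (Prod.fst ⁻¹' S)) := by
  refine le_antisymm ?_ (Algebra.adjoin_le ?_)
  · have hm : ∀ i ∈ S, ∀ b, majorana a (i, b) ∈ Algebra.adjoin ℂ (majorana a '' (Prod.fst ⁻¹' S)) :=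
      fun i hi b => Algebra.subset_adjoin (Set.mem_image_of_mem _ (show (i, b).1 ∈ S from hi))
    have ha : ∀ i ∈ S, a i ∈ Algebra.adjoin ℂ (majorana a '' (Prod.fst ⁻¹' S)) := fun i hi => by
      rw [eq_majorana (a := a) i]
      exact Subalgebra.smul_mem _
        (sub_mem (hm i hi false) (Subalgebra.smul_mem _ (hm i hi true) _)) _
    rw [StarAlgebra.adjoin_toSubalgebra, Algebra.adjoin_le_iff]
    rintro x (⟨i, hi, rfl⟩ | ⟨i, hi, hx⟩)
    · exact ha i hi
    · rw [← star_star x, ← hx, star_eq_majorana_sub]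
      exact sub_mem (hm i hi false) (ha i hi)
  · rintro _ ⟨g, hg, rfl⟩
    exact majorana_mem_adjoin hg

theorem map_majorana (Θ : A ≃⋆ₐ[ℂ] A) (hΘ : ∀ i, Θ (a i) = -a i) (g : ι × Bool) :
    Θ (majorana a g) = -majorana a g := by
  rcases g with ⟨i, _ | _⟩
  · simp [majorana, map_star, hΘ, add_comm]
  · simp only [majorana, map_smul, map_sub, map_star, hΘ, star_neg, ← smul_neg, neg_sub]
    abel_nf

theorem majorana_mul_eq_neg_mul_majorana (hc : IsCliffordFamily (majorana a)) {i j : ι}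
    (hij : j ≠ i) (b : Bool) : majorana a (j, b) * a i = -(a i * majorana a (j, b)) := by
  have h₁ : (j, b) ≠ (i, false) := fun h => hij (congrArg Prod.fst h)
  have h₂ : (j, b) ≠ (i, true) := fun h => hij (congrArg Prod.fst h)
  rw [eq_majorana (a := a) i]
  simp only [mul_smul_comm, smul_mul_assoc, mul_sub, sub_mul, hc.anticomm _ _ h₁,
    hc.anticomm _ _ h₂]
  module

theorem majorana_mem_unitary [StarModule ℂ A] (hc : IsCliffordFamily (majorana a))
    (g : ι × Bool) : majorana a g ∈ unitary A := by
  rw [Unitary.mem_iff, star_majorana, and_self, hc.mul_self]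

end Majorana

section CARAlgebra

variable {ν : ℕ} {A : Type*} [CStarAlgebra A] {a : (Fin ν → ℤ) → A}

theorem mem_carSub_iff {S : Set (Fin ν → ℤ)} {x : A} :
    x ∈ carSub a S ↔
      x ∈ (Algebra.adjoin ℂ (majorana a '' (Prod.fst ⁻¹' S))).topologicalClosure := by
  rw [← toSubalgebra_starAlgebraAdjoin_image, ← StarSubalgebra.topologicalClosure_toSubalgebra_comm]
  rfl

theorem majorana_mul_mul_majorana_eq (hc : IsCliffordFamily (majorana a)) (Θ : A ≃⋆ₐ[ℂ] A)
    (hΘ : ∀ i, Θ (a i) = -a i) {I : Set (Fin ν → ℤ)} {j : Fin ν → ℤ} (hj : j ∉ I) (b : Bool)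
    {z : A} (hz : z ∈ carSub a I) :
    majorana a (j, b) * z * majorana a (j, b) = Θ z := by
  let φ := Unitary.conjStarAlgAut ℂ A ⟨_, majorana_mem_unitary hc (j, b)⟩
  suffices carSub a I ≤ StarAlgHom.equalizer φ Θ by
    simpa [φ, star_majorana] using this hz
  refine StarSubalgebra.topologicalClosure_minimal (StarAlgHom.adjoin_le_equalizer _ _ ?_)
    (isClosed_eq (StarAlgEquiv.isometry φ).continuous (StarAlgEquiv.isometry Θ).continuous)
  rintro _ ⟨i, hi, rfl⟩
  have hij : j ≠ i := fun h => hj (h ▸ hi)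
  simp [φ, star_majorana, hΘ, majorana_mul_eq_neg_mul_majorana hc hij, mul_assoc, hc.mul_self]

theorem commute_of_mem_carSub_compl (hc : IsCliffordFamily (majorana a)) (Θ : A ≃⋆ₐ[ℂ] A)
    (hΘ : ∀ i, Θ (a i) = -a i) {I : Set (Fin ν → ℤ)} {x y : A} (hx : x ∈ carSub a Iᶜ)
    (hy : y ∈ carSub a I) (hyΘ : Θ y = y) : Commute x y := by
  have hcomm : ∀ j ∉ I, ∀ b, Commute (majorana a (j, b)) y := fun j hj b => by
    calc majorana a (j, b) * y
        = majorana a (j, b) * y * majorana a (j, b) * majorana a (j, b) := by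
          rw [mul_assoc _ (majorana a (j, b)), hc.mul_self, mul_one]
      _ = y * majorana a (j, b) := by rw [majorana_mul_mul_majorana_eq hc Θ hΘ hj b hy, hyΘ]
  have hle : (Algebra.adjoin ℂ (majorana a '' (Prod.fst ⁻¹' Iᶜ))).topologicalClosure ≤
      Subalgebra.centralizer ℂ {y} := by
    refine Subalgebra.topologicalClosure_minimal (Algebra.adjoin_le ?_) (Set.isClosed_centralizer _)
    rintro _ ⟨⟨j, b⟩, hj, rfl⟩
    exact Set.mem_centralizer_iff.mpr fun _ h => h ▸ (hcomm j hj b).eq.symm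
  exact ((Subalgebra.mem_centralizer_iff ℂ).mp (hle (mem_carSub_iff.mp hx)) y rfl).symm

theorem mem_carSub_compl_of_conj (hc : IsCliffordFamily (majorana a))
    (hgen : carSub a Set.univ = ⊤) {I : Set (Fin ν → ℤ)} (hI : I.Infinite) (s : ℕ) {z : A}
    (hz : ∀ g : (Fin ν → ℤ) × Bool, g.1 ∈ I → majorana a g * z * majorana a g = (-1 : ℂ) ^ s • z) :
    z ∈ carSub a Iᶜ := by
  have hz_mem : z ∈ (Algebra.adjoin ℂ (Set.range (majorana a))).topologicalClosure := by
    simpa using mem_carSub_iff.mp (hgen ▸ StarSubalgebra.mem_top : z ∈ carSub a Set.univ)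
  rw [mem_carSub_iff, Set.preimage_compl]
  refine hc.mem_closure_adjoin_compl_of_conj (fun g => ?_)
    (Set.prod_univ (s := I) ▸ hI.prod_left Set.univ_nonempty) s hz_mem hz
  nontriviality A
  exact (CStarRing.norm_of_mem_unitary (majorana_mem_unitary hc g)).le

end CARAlgebra

/-- In the CAR algebra `A` over `ℤ^ν`, for an infinite subset `I`, the
commutant of the even part `A(I)₊` in `A` equals `A(I^c)`. -/
theorem car_commutant_of_even_part_infinite
    {ν : ℕ} {A : Type*} [CStarAlgebra A]
    (a : (Fin ν → ℤ) → A)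
    (hCAR₁ : ∀ i j, star (a i) * a j + a j * star (a i) = if i = j then (1 : A) else 0)
    (hCAR₂ : ∀ i j, a i * a j + a j * a i = 0)
    (hgen : carSub a Set.univ = ⊤)
    (Θ : A ≃⋆ₐ[ℂ] A)
    (hΘ : ∀ i, Θ (a i) = - a i)
    (I : Set (Fin ν → ℤ)) (hI : I.Infinite) :
    ∀ x : A, (∀ y ∈ carSub a I, Θ y = y → x * y = y * x) ↔ x ∈ carSub a Iᶜ := by
  intro x
  have hc := isCliffordFamily_majorana hCAR₁ hCAR₂
  refine ⟨fun hx => ?_, fun hx y hy hyΘ => commute_of_mem_carSub_compl hc Θ hΘ hx hy hyΘ⟩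
  have hmem : ∀ g : (Fin ν → ℤ) × Bool, g.1 ∈ I → majorana a g ∈ carSub a I := fun g hg =>
    StarSubalgebra.le_topologicalClosure _ (majorana_mem_adjoin hg)
  obtain ⟨i, hi⟩ := hI.nonempty
  obtain ⟨x₀, x₁, rfl, hx₀₁⟩ := hc.exists_eq_add_conj_eq_and_conj_eq_neg (𝕜 := ℂ)
    (J := Prod.fst ⁻¹' I) ⟨(i, false), hi⟩ fun g hg h hh =>
      hx _ (mul_mem (hmem g hg) (hmem h hh)) (by rw [map_mul, map_majorana Θ hΘ,
        map_majorana Θ hΘ, neg_mul_neg])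
  exact add_mem (mem_carSub_compl_of_conj hc hgen hI 0 fun g hg => by simpa using (hx₀₁ g hg).1)
    (mem_carSub_compl_of_conj hc hgen hI 1 fun g hg => by simpa using (hx₀₁ g hg).2)
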